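/- Pointwise monotonicity of the full-fill trajectory in the advertisement sequence: Let A, B : {1,…,N} → [0,1] be advertisement sequences with A_i ≤ B_i for every i, and fix an initial reputation R_1 ∈ [0,1]. Then the full-fill trajectories started from R_1 under A and under B satisfy R^A_i ≤ R^B_i, R'^A_i ≤ R'^B_i, and D(R'^A_i) ≤ D(R'^B_i) for every i = 1,…,N. -/

import Mathlib

noncomputable section

/-- Post-advertisement reputation map. -/
def frep (α R a : ℝ) : ℝ := R + (1 - R) * a ^ α

/-- Demand function. -/
def dem (Λ q x : ℝ) : ℝ := if 0 < x then max 0 (Λ * (1 - q / x)) else 0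

/-- Full-fill reputation trajectory (0-indexed periods). -/
def rep (α w Λ q : ℝ) (A : ℕ → ℝ) (R1 : ℝ) : ℕ → ℝ
  | 0 => R1
  | i + 1 =>
      let R' := frep α (rep α w Λ q A R1 i) (A i)
      if 0 < dem Λ q R' then (1 - w) * R' + w else R'

/-- Full-fill total profit over horizon `N`. -/
def profit (α w Λ q p c cA : ℝ) (A : ℕ → ℝ) (R1 : ℝ) (N : ℕ) : ℝ :=
  ∑ i ∈ Finset.range N,
    ((p - c) * dem Λ q (frep α (rep α w Λ q A R1 i) (A i)) - cA * A i)

/-!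
Induction on the period. Demand is nondecreasing in reputation, so the post-advertisement
map `frep` and the full-fill update are both monotone, provided all reputations stay
at most `1`. That bound is itself preserved by both maps.
-/

theorem dem_monotone {Λ q : ℝ} (hΛ : 0 ≤ Λ) (hq : 0 ≤ q) : Monotone (dem Λ q) := by
  intro x y hxy
  unfold dem
  split_ifs with hx hy hy
  · have : q / y ≤ q / x := div_le_div_of_nonneg_left hq hx hxy
    gcongr
  · exact absurd (hx.trans_le hxy) hy
  · exact le_max_left _ _
  · exact le_rfl

section frep

variable {α R S a b : ℝ}

-- `1 - frep α R a = (1 - R) * (1 - a ^ α)`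
theorem frep_le_one (hα : 0 ≤ α) (hR : R ≤ 1) (ha0 : 0 ≤ a) (ha1 : a ≤ 1) :
    frep α R a ≤ 1 := by
  have : a ^ α ≤ 1 := Real.rpow_le_one ha0 ha1 hα
  unfold frep
  nlinarith

-- `frep α S b - frep α R a = (S - R) * (1 - b ^ α) + (1 - R) * (b ^ α - a ^ α)`
theorem frep_le_frep (hα : 0 ≤ α) (hR : R ≤ 1) (ha : 0 ≤ a) (hb : b ≤ 1)
    (hRS : R ≤ S) (hab : a ≤ b) : frep α R a ≤ frep α S b := by
  have hpow : a ^ α ≤ b ^ α := Real.rpow_le_rpow ha hab hα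
  have hb1 : b ^ α ≤ 1 := Real.rpow_le_one (ha.trans hab) hb hα
  unfold frep
  nlinarith [mul_nonneg (sub_nonneg.2 hRS) (sub_nonneg.2 hb1),
    mul_nonneg (sub_nonneg.2 hR) (sub_nonneg.2 hpow)]

end frep

def fullFillStep (w Λ q x : ℝ) : ℝ := if 0 < dem Λ q x then (1 - w) * x + w else x

theorem rep_succ (α w Λ q : ℝ) (A : ℕ → ℝ) (R1 : ℝ) (i : ℕ) :
    rep α w Λ q A R1 (i + 1) = fullFillStep w Λ q (frep α (rep α w Λ q A R1 i) (A i)) :=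
  rfl

section fullFillStep

variable {w Λ q x y : ℝ}

theorem fullFillStep_le_one (hw1 : w ≤ 1) (hx : x ≤ 1) :
    fullFillStep w Λ q x ≤ 1 := by
  unfold fullFillStep
  split_ifs
  · nlinarith
  · exact hx

-- Raising `x` can only switch demand on, and `x ≤ (1 - w) * x + w` for `x ≤ 1`.
theorem fullFillStep_le_fullFillStep (hD : Monotone (dem Λ q)) (hw0 : 0 ≤ w)
    (hw1 : w ≤ 1) (hy : y ≤ 1) (hxy : x ≤ y) :
    fullFillStep w Λ q x ≤ fullFillStep w Λ q y := by
  unfold fullFillStep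
  split_ifs with hx' hy'
  · nlinarith
  · exact absurd (hx'.trans_le (hD hxy)) hy'
  · nlinarith
  · exact hxy

end fullFillStep

section rep

variable {α w Λ q R1 : ℝ} {A B : ℕ → ℝ}

theorem rep_le_one (hα : 0 ≤ α) (hw1 : w ≤ 1)
    (hA : ∀ i, 0 ≤ A i ∧ A i ≤ 1) (hR1 : R1 ≤ 1) (i : ℕ) : rep α w Λ q A R1 i ≤ 1 := by
  induction i with
  | zero => exact hR1
  | succ i ih =>
    rw [rep_succ]
    exact fullFillStep_le_one hw1 (frep_le_one hα ih (hA i).1 (hA i).2)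

theorem rep_le_rep (hD : Monotone (dem Λ q)) (hα : 0 ≤ α) (hw0 : 0 ≤ w) (hw1 : w ≤ 1)
    (hA : ∀ i, 0 ≤ A i) (hB : ∀ i, 0 ≤ B i ∧ B i ≤ 1) (hAB : ∀ i, A i ≤ B i)
    (hR1 : R1 ≤ 1) (i : ℕ) : rep α w Λ q A R1 i ≤ rep α w Λ q B R1 i := by
  induction i with
  | zero => exact le_rfl
  | succ i ih =>
    have hA1 : ∀ j, 0 ≤ A j ∧ A j ≤ 1 := fun j => ⟨hA j, (hAB j).trans (hB j).2⟩
    rw [rep_succ, rep_succ]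
    exact fullFillStep_le_fullFillStep hD hw0 hw1
      (frep_le_one hα (rep_le_one hα hw1 hB hR1 i) (hB i).1 (hB i).2)
      (frep_le_frep hα (rep_le_one hα hw1 hA1 hR1 i) (hA i) (hB i).2 ih (hAB i))

end rep

theorem full_fill_monotone_in_advertisement_general
    (Λ m u p α w R1 q : ℝ) (N : ℕ)
    (hΛ : 0 < Λ) (hm : 0 < m) (hu : 0 ≤ u) (hp : 0 < p)
    (hqdef : q = (u + p) / m)
    (hα : 0 < α) (hw0 : 0 ≤ w) (hw1 : w ≤ 1)
    (A B : ℕ → ℝ)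
    (hA : ∀ i, 0 ≤ A i ∧ A i ≤ 1) (hB : ∀ i, 0 ≤ B i ∧ B i ≤ 1)
    (hAB : ∀ i, A i ≤ B i)
    (hR11 : R1 ≤ 1) :
    ∀ i, i + 1 ≤ N →
      rep α w Λ q A R1 i ≤ rep α w Λ q B R1 i ∧
      frep α (rep α w Λ q A R1 i) (A i) ≤ frep α (rep α w Λ q B R1 i) (B i) ∧
      dem Λ q (frep α (rep α w Λ q A R1 i) (A i)) ≤
        dem Λ q (frep α (rep α w Λ q B R1 i) (B i)) := by
  intro i _
  have hD : Monotone (dem Λ q) := dem_monotone hΛ.le (by rw [hqdef]; positivity)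
  have hrep := rep_le_rep hD hα.le hw0 hw1 (fun j => (hA j).1) hB hAB hR11 i
  have hfrep := frep_le_frep hα.le (rep_le_one hα.le hw1 hA hR11 i) (hA i).1 (hB i).2
    hrep (hAB i)
  exact ⟨hrep, hfrep, hD hfrep⟩

/-- Pointwise monotonicity of the full-fill trajectory in the advertisement
sequence: pointwise larger advertisement levels yield pointwise larger
reputations, post-advertisement reputations, and demands. -/
theorem full_fill_monotone_in_advertisement
    (Λ m u p α w R1 q : ℝ) (N : ℕ)
    (hΛ : 0 < Λ) (hm : 0 < m) (hu : 0 ≤ u) (hp : 0 < p)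
    (hqdef : q = (u + p) / m) (hq1 : q < 1)
    (hα : 0 < α) (hw0 : 0 ≤ w) (hw1 : w ≤ 1)
    (A B : ℕ → ℝ)
    (hA : ∀ i, 0 ≤ A i ∧ A i ≤ 1) (hB : ∀ i, 0 ≤ B i ∧ B i ≤ 1)
    (hAB : ∀ i, A i ≤ B i)
    (hR10 : 0 ≤ R1) (hR11 : R1 ≤ 1) :
    ∀ i, i + 1 ≤ N →
      rep α w Λ q A R1 i ≤ rep α w Λ q B R1 i ∧
      frep α (rep α w Λ q A R1 i) (A i) ≤ frep α (rep α w Λ q B R1 i) (B i) ∧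
      dem Λ q (frep α (rep α w Λ q A R1 i) (A i)) ≤
        dem Λ q (frep α (rep α w Λ q B R1 i) (B i)) :=
  full_fill_monotone_in_advertisement_general Λ m u p α w R1 q N hΛ hm hu hp hqdef hα hw0 hw1 A B hA
    hB hAB hR11
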